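/- Let S be a finite non-abelian simple group, let G be a finite group, and suppose N = S × ⋯ × S (a direct product of k copies of S) is a minimal normal subgroup of G. If χ is an irreducible complex character of S that is extendible to Aut(S), then the product character χ × ⋯ × χ of N is extendible to G/C_G(N); in particular, G has an irreducible complex character of degree χ(1)^k. -/

import Mathlib

open CategoryTheory

/-- `n` is the degree of an irreducible complex character of `G`. -/
def IsIrrDegree (G : Type) [Group G] (n : ℕ) : Prop :=
  ∃ V : FDRep ℂ G, Simple V ∧ Module.finrank ℂ V = n

/-- `b(G)`: the largest degree of an irreducible character of `G`. -/
noncomputable def bDeg (G : Type) [Group G] : ℕ :=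
  sSup {n | IsIrrDegree G n}

/-- `c(G)`: the smallest degree of a nonlinear irreducible character of `G`
(with the convention `c(G) = 1` when `G` is abelian). -/
noncomputable def cDeg (G : Type) [Group G] : ℕ :=
  max 1 (sInf {n | IsIrrDegree G n ∧ 1 < n})

/-- The character degree ratio `rat(G) = b(G)/c(G)`. -/
noncomputable def charRatio (G : Type) [Group G] : ℝ :=
  (bDeg G : ℝ) / (cDeg G : ℝ)

/-- `σ` is a composition series of `G`:  it starts at the trivial subgroup, ends at `G`,
and each term is normal in the next with simple quotient. -/
def IsCompSeries {G : Type*} [Group G] {n : ℕ} (σ : Fin (n + 1) → Subgroup G) : Prop :=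
  σ 0 = ⊥ ∧ σ (Fin.last n) = ⊤ ∧
    ∀ i : Fin n, σ i.castSucc ≤ σ i.succ ∧
      ∃ _ : ((σ i.castSucc).subgroupOf (σ i.succ)).Normal,
        IsSimpleGroup (↥(σ i.succ) ⧸ (σ i.castSucc).subgroupOf (σ i.succ))

/-- The composition factor at position `i` of the series `σ` is non-abelian. -/
def NonabelianFactor {G : Type*} [Group G] {n : ℕ} (σ : Fin (n + 1) → Subgroup G)
    (i : Fin n) : Prop :=
  ¬ ∀ a b : G, a ∈ σ i.succ → b ∈ σ i.succ → a * b * a⁻¹ * b⁻¹ ∈ σ i.castSucc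

/-- The number of non-abelian composition factors of the series `σ`. -/
noncomputable def nonabCount {G : Type*} [Group G] {n : ℕ}
    (σ : Fin (n + 1) → Subgroup G) : ℕ :=
  Nat.card {i : Fin n // NonabelianFactor σ i}

/-- `N` is a minimal normal subgroup of `G`. -/
def IsMinimalNormal {G : Type*} [Group G] (N : Subgroup G) : Prop :=
  N.Normal ∧ N ≠ ⊥ ∧ ∀ M : Subgroup G, M.Normal → M ≤ N → M ≠ ⊥ → M = N

/-- An irreducible character (given by a representation `V`) of `S` is extendible to `Aut(S)`:
there is an irreducible character of `Aut(S)` restricting, along the embedding of `S` into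
`Aut(S)` by conjugation, to the character of `V`. -/
def ExtendsToAut (S : Type) [Group S] (V : FDRep ℂ S) : Prop :=
  ∃ W : FDRep ℂ (MulAut S), Simple W ∧
    ∀ s : S, W.character (MulAut.conj s) = V.character s

/-!
The factors of `S^k` are its minimal normal subgroups (a nontrivial normal subgroup contains the
commutator of one of its elements with an element of a single factor), so every automorphism of
`S^k` permutes them and `Aut(S^k)` lies in the wreath product `Aut(S) ≀ Sym(k)`. A representation
`ψ` of `Aut(S)` extending `χ` therefore tensor-induces to a representation of `Aut(S^k)` on
`(ℂᵈ)^{⊗k}`, whose restriction to the inner automorphisms has character `χ × ⋯ × χ`. That character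
has norm one, so already the restriction to `S^k ≅ N` is irreducible. Pulling the representation
back along the conjugation action `G → Aut(N)`, which kills `C_G(N)`, gives the irreducible
representations of `G/C_G(N)` and of `G`.
-/

section PowersOfSimpleGroups

variable {ι S : Type*} [DecidableEq ι] [Group S]

theorem IsSimpleGroup.center_eq_bot [IsSimpleGroup S] (hS : ¬ ∀ a b : S, a * b = b * a) :
    Subgroup.center S = ⊥ :=
  (inferInstance : (Subgroup.center S).Normal).eq_bot_or_eq_top.resolve_right fun h =>
    hS fun a b => Subgroup.mem_center_iff.mp (h ▸ Subgroup.mem_top b) a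

variable (S) in
def Pi.factor (i : ι) : Subgroup (ι → S) :=
  (MonoidHom.mulSingle (fun _ => S) i).range

theorem Pi.mulSingle_mem_factor (i : ι) (s : S) : Pi.mulSingle i s ∈ Pi.factor S i :=
  ⟨s, rfl⟩

variable (S) in
noncomputable def Pi.mulEquivFactor (i : ι) : S ≃* Pi.factor S i :=
  MonoidHom.ofInjective (show Function.Injective (MonoidHom.mulSingle (fun _ => S) i) from
    Pi.mulSingle_injective (M := fun _ : ι => S) i)

theorem Pi.mulSingle_mulEquivFactor_symm {i : ι} (x : Pi.factor S i) :
    Pi.mulSingle i ((Pi.mulEquivFactor S i).symm x) = (x : ι → S) :=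
  MonoidHom.apply_ofInjective_symm _ x

instance Pi.normal_factor (i : ι) : (Pi.factor S i).Normal :=
  ⟨fun _ ⟨s, hs⟩ g => ⟨g i * s * (g i)⁻¹, by
    subst hs; funext j; by_cases hj : j = i
    · subst hj; simp
    · simp [Pi.mulSingle_eq_of_ne hj]⟩⟩

theorem Pi.factor_ne_bot [Nontrivial S] (i : ι) : Pi.factor S i ≠ ⊥ := by
  obtain ⟨s, hs⟩ := exists_ne (1 : S)
  exact Subgroup.ne_bot_iff_exists_ne_one.mpr ⟨⟨_, Pi.mulSingle_mem_factor i s⟩, by simpa using hs⟩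

theorem Pi.eq_of_factor_le_factor [Nontrivial S] {i j : ι} (h : Pi.factor S i ≤ Pi.factor S j) :
    i = j := by
  obtain ⟨s, hs⟩ := exists_ne (1 : S)
  obtain ⟨t, ht⟩ := h (Pi.mulSingle_mem_factor i s)
  by_contra hij
  have := congrFun ht i
  simp [Pi.mulSingle_eq_of_ne hij, hs.symm] at this

theorem Pi.exists_factor_le_of_normal [IsSimpleGroup S] (hS : ¬ ∀ a b : S, a * b = b * a)
    {M : Subgroup (ι → S)} (hM : M.Normal) (hM₀ : M ≠ ⊥) : ∃ i, Pi.factor S i ≤ M := by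
  obtain ⟨x, hxM, hx⟩ := (Subgroup.bot_or_exists_ne_one M).resolve_left hM₀
  obtain ⟨i, hi⟩ := Function.ne_iff.mp hx
  have hxi : x i ∉ Subgroup.center S := by
    rwa [IsSimpleGroup.center_eq_bot hS, Subgroup.mem_bot]
  obtain ⟨s, hs⟩ : ∃ s, s * x i ≠ x i * s := by
    simpa [Subgroup.mem_center_iff] using hxi
  have hcomm : Pi.mulSingle i (s * x i * s⁻¹ * (x i)⁻¹) ∈ M := by
    convert M.mul_mem (hM.conj_mem x hxM (Pi.mulSingle i s)) (M.inv_mem hxM) using 1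
    funext j
    by_cases hj : j = i
    · subst hj; simp
    · simp [Pi.mulSingle_eq_of_ne hj]
  have hK : M.comap (MonoidHom.mulSingle (fun _ => S) i) = ⊤ := by
    refine (hM.comap _).eq_bot_or_eq_top.resolve_left fun hbot => hs ?_
    have hmem : s * x i * s⁻¹ * (x i)⁻¹ ∈ M.comap (MonoidHom.mulSingle (fun _ => S) i) := hcomm
    rwa [hbot, Subgroup.mem_bot, mul_inv_eq_one, mul_inv_eq_iff_eq_mul] at hmem
  exact ⟨i, by rw [Pi.factor, MonoidHom.range_eq_map, Subgroup.map_le_iff_le_comap, hK]⟩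

theorem MulAut.exists_map_factor [IsSimpleGroup S] (hS : ¬ ∀ a b : S, a * b = b * a)
    (φ : MulAut (ι → S)) (i : ι) : ∃ j, (Pi.factor S i).map φ.toMonoidHom = Pi.factor S j := by
  have hinj : Function.Injective φ.toMonoidHom := φ.injective
  have hsurj : Function.Surjective φ.toMonoidHom := φ.surjective
  obtain ⟨j, hj⟩ := Pi.exists_factor_le_of_normal hS ((Pi.normal_factor i).map _ hsurj)
    ((Subgroup.map_eq_bot_iff_of_injective _ hinj).not.mpr (Pi.factor_ne_bot i))
  -- the preimage of the factor `j` is nontrivial, normal and inside the factor `i`, so equals it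
  have hle : (Pi.factor S j).comap φ.toMonoidHom ≤ Pi.factor S i := by
    rw [← Subgroup.comap_map_eq_self_of_injective hinj (Pi.factor S i)]
    exact Subgroup.comap_mono hj
  obtain ⟨l, hl⟩ := Pi.exists_factor_le_of_normal hS ((Pi.normal_factor j).comap φ.toMonoidHom)
    fun h => Pi.factor_ne_bot (S := S) j <| by
      rw [← Subgroup.map_comap_eq_self_of_surjective hsurj (Pi.factor S j), h, Subgroup.map_bot]
  obtain rfl := Pi.eq_of_factor_le_factor (hl.trans hle)
  exact ⟨j, le_antisymm (Subgroup.map_le_iff_le_comap.mpr hl) hj⟩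

theorem MulAut.exists_map_mulSingle [IsSimpleGroup S] (hS : ¬ ∀ a b : S, a * b = b * a)
    (φ : MulAut (ι → S)) (i : ι) :
    ∃ j, ∃ γ : MulAut S, ∀ s, φ (Pi.mulSingle i s) = Pi.mulSingle j (γ s) := by
  obtain ⟨j, hj⟩ := MulAut.exists_map_factor hS φ i
  refine ⟨j, (Pi.mulEquivFactor S i).trans <| (φ.subgroupMap _).trans <|
    (MulEquiv.subgroupCongr hj).trans (Pi.mulEquivFactor S j).symm, fun s => ?_⟩
  exact (Pi.mulSingle_mulEquivFactor_symm
    (MulEquiv.subgroupCongr hj (φ.subgroupMap _ (Pi.mulEquivFactor S i s)))).symm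

theorem MulAut.conj_mulSingle (f : ι → S) (i : ι) (s : S) :
    MulAut.conj f (Pi.mulSingle i s) = Pi.mulSingle i (MulAut.conj (f i) s) := by
  funext j
  by_cases hj : j = i
  · subst hj; simp
  · simp [Pi.mulSingle_eq_of_ne hj]

end PowersOfSimpleGroups

/-- A choice of the data exhibiting every automorphism of `ι → S` as an element of the wreath
product `Aut(S) ≀ Sym(ι)`: it maps the factor `i` to the factor `perm φ i` through `aut φ i`. -/
structure WreathDecomposition (ι S : Type*) [DecidableEq ι] [Group S] where
  perm : MulAut (ι → S) → ι → ι
  aut : MulAut (ι → S) → ι → MulAut S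
  map_mulSingle : ∀ φ i s, φ (Pi.mulSingle i s) = Pi.mulSingle (perm φ i) (aut φ i s)

namespace WreathDecomposition

variable {ι S : Type*} [DecidableEq ι] [Group S]

theorem nonempty [IsSimpleGroup S] (hS : ¬ ∀ a b : S, a * b = b * a) :
    Nonempty (WreathDecomposition ι S) := by
  choose p c h using MulAut.exists_map_mulSingle (ι := ι) hS
  exact ⟨⟨p, c, h⟩⟩

variable (D : WreathDecomposition ι S)

theorem map_mul_mulSingle (φ φ' : MulAut (ι → S)) (i : ι) (s : S) :
    (φ * φ') (Pi.mulSingle i s) =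
      Pi.mulSingle (D.perm φ (D.perm φ' i)) ((D.aut φ (D.perm φ' i) * D.aut φ' i) s) := by
  rw [MulAut.mul_apply, D.map_mulSingle, D.map_mulSingle, MulAut.mul_apply]

variable [Nontrivial S]

theorem eq_of_map_mulSingle {φ : MulAut (ι → S)} {i j : ι} {γ : S →* S}
    (h : ∀ s, φ (Pi.mulSingle i s) = Pi.mulSingle j (γ s)) :
    D.perm φ i = j ∧ ∀ s, D.aut φ i s = γ s := by
  obtain ⟨s₀, hs₀⟩ := exists_ne (1 : S)
  have hj : D.perm φ i = j := by
    by_contra hne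
    have := congrFun ((D.map_mulSingle φ i s₀).symm.trans (h s₀)) (D.perm φ i)
    rw [Pi.mulSingle_eq_same, Pi.mulSingle_eq_of_ne hne] at this
    exact hs₀ ((D.aut φ i).map_eq_one_iff.mp this)
  refine ⟨hj, fun s => ?_⟩
  have := (D.map_mulSingle φ i s).symm.trans (h s)
  rwa [hj, Pi.mulSingle_inj] at this

theorem perm_one (i : ι) : D.perm 1 i = i :=
  (D.eq_of_map_mulSingle (γ := MonoidHom.id S) fun _ => rfl).1

theorem aut_one (i : ι) : D.aut 1 i = 1 :=
  MulEquiv.ext (D.eq_of_map_mulSingle (γ := MonoidHom.id S) fun _ => rfl).2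

theorem perm_mul (φ φ' : MulAut (ι → S)) (i : ι) :
    D.perm (φ * φ') i = D.perm φ (D.perm φ' i) :=
  (D.eq_of_map_mulSingle (γ := (D.aut φ (D.perm φ' i) * D.aut φ' i).toMonoidHom)
    (D.map_mul_mulSingle φ φ' i)).1

theorem aut_mul (φ φ' : MulAut (ι → S)) (i : ι) :
    D.aut (φ * φ') i = D.aut φ (D.perm φ' i) * D.aut φ' i :=
  MulEquiv.ext (D.eq_of_map_mulSingle (γ := (D.aut φ (D.perm φ' i) * D.aut φ' i).toMonoidHom)
    (D.map_mul_mulSingle φ φ' i)).2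

theorem perm_conj (f : ι → S) (i : ι) : D.perm (MulAut.conj f) i = i :=
  (D.eq_of_map_mulSingle (γ := (MulAut.conj (f i)).toMonoidHom) (MulAut.conj_mulSingle f i)).1

theorem aut_conj (f : ι → S) (i : ι) : D.aut (MulAut.conj f) i = MulAut.conj (f i) :=
  MulEquiv.ext (D.eq_of_map_mulSingle (γ := (MulAut.conj (f i)).toMonoidHom)
    (MulAut.conj_mulSingle f i)).2

def permEquiv (φ : MulAut (ι → S)) : Equiv.Perm ι where
  toFun := D.perm φ
  invFun := D.perm φ⁻¹
  left_inv i := by rw [← D.perm_mul, inv_mul_cancel, D.perm_one]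
  right_inv i := by rw [← D.perm_mul, mul_inv_cancel, D.perm_one]

theorem permEquiv_one : D.permEquiv 1 = 1 := Equiv.ext D.perm_one

theorem permEquiv_mul (φ φ' : MulAut (ι → S)) :
    D.permEquiv (φ * φ') = D.permEquiv φ * D.permEquiv φ' :=
  Equiv.ext (D.perm_mul φ φ')

theorem permEquiv_conj (f : ι → S) : D.permEquiv (MulAut.conj f) = 1 :=
  Equiv.ext (D.perm_conj f)

end WreathDecomposition

namespace Matrix

variable {ι n R : Type*} [Fintype ι] [CommRing R]

/-- The matrix of the element `(σ, A)` of the wreath product `GL_n(R) ≀ Sym(ι)` acting on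
`⨂ᵢ Rⁿ`, in the basis indexed by `ι → n`. -/
def piKroneckerPerm (σ : Equiv.Perm ι) (A : ι → Matrix n n R) : Matrix (ι → n) (ι → n) R :=
  of fun J J' => ∏ i, A i (J (σ i)) (J' i)

theorem piKroneckerPerm_apply (σ : Equiv.Perm ι) (A : ι → Matrix n n R) (J J' : ι → n) :
    piKroneckerPerm σ A J J' = ∏ i, A i (J (σ i)) (J' i) := rfl

theorem piKroneckerPerm_one [DecidableEq n] :
    piKroneckerPerm (1 : Equiv.Perm ι) (fun _ => (1 : Matrix n n R)) = 1 := by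
  ext J J'
  by_cases h : J = J'
  · subst h
    rw [one_apply_eq]
    exact Finset.prod_eq_one fun i _ => one_apply_eq (J i)
  · obtain ⟨i, hi⟩ := Function.ne_iff.mp h
    rw [one_apply_ne h, piKroneckerPerm_apply]
    exact Finset.prod_eq_zero (Finset.mem_univ i) (one_apply_ne hi)

variable [DecidableEq ι] [Fintype n]

theorem piKroneckerPerm_mul (σ τ : Equiv.Perm ι) (A B : ι → Matrix n n R) :
    piKroneckerPerm σ A * piKroneckerPerm τ B =
      piKroneckerPerm (σ * τ) fun i => A (τ i) * B i := by
  ext J J''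
  simp only [mul_apply, piKroneckerPerm_apply, Equiv.Perm.mul_apply]
  calc ∑ J' : ι → n, (∏ i, A i (J (σ i)) (J' i)) * ∏ i, B i (J' (τ i)) (J'' i)
      = ∑ J' : ι → n, ∏ l, A l (J (σ l)) (J' l) * B (τ.symm l) (J' l) (J'' (τ.symm l)) := by
        refine Finset.sum_congr rfl fun J' _ => ?_
        rw [← Equiv.prod_comp τ.symm fun i => B i (J' (τ i)) (J'' i), ← Finset.prod_mul_distrib]
        simp only [Equiv.apply_symm_apply]
    _ = ∏ l, ∑ t, A l (J (σ l)) t * B (τ.symm l) t (J'' (τ.symm l)) :=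
        (Fintype.prod_sum fun l t => A l (J (σ l)) t * B (τ.symm l) t (J'' (τ.symm l))).symm
    _ = ∏ i, ∑ t, A (τ i) (J (σ (τ i))) t * B i t (J'' i) := by
        rw [← Equiv.prod_comp τ]
        simp only [Equiv.symm_apply_apply]

theorem trace_piKroneckerPerm_one (A : ι → Matrix n n R) :
    (piKroneckerPerm 1 A).trace = ∏ i, (A i).trace := by
  simp only [trace, diag, piKroneckerPerm_apply, Equiv.Perm.one_apply]
  exact (Fintype.prod_sum fun i t => A i t t).symm

end Matrix

namespace WreathDecomposition

variable {ι S : Type*} [DecidableEq ι] [Fintype ι] [Group S] [Nontrivial S]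
  (D : WreathDecomposition ι S)

section

variable {n R : Type*} [Fintype n] [DecidableEq n] [CommRing R]

def tensorInduced (m : MulAut S →* Matrix n n R) :
    MulAut (ι → S) →* Matrix (ι → n) (ι → n) R where
  toFun φ := Matrix.piKroneckerPerm (D.permEquiv φ) fun i => m (D.aut φ i)
  map_one' := by simp only [permEquiv_one, aut_one, map_one, Matrix.piKroneckerPerm_one]
  map_mul' φ φ' := by
    simp only [Matrix.piKroneckerPerm_mul, permEquiv_mul, aut_mul, map_mul]
    rfl

theorem trace_tensorInduced_conj (m : MulAut S →* Matrix n n R) (f : ι → S) :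
    (D.tensorInduced m (MulAut.conj f)).trace = ∏ i, (m (MulAut.conj (f i))).trace := by
  simp only [tensorInduced, MonoidHom.coe_mk, OneHom.coe_mk, permEquiv_conj, aut_conj,
    Matrix.trace_piKroneckerPerm_one]

end

variable {k : Type*} [Field k]

/-- The tensor induction of `ψ`, on `(kᵈ)^{⊗ι}` written in the basis indexed by `ι → Fin d`. -/
noncomputable def tensorInducedRep (ψ : FDRep k (MulAut S)) :
    Representation k (MulAut (ι → S)) ((ι → Fin (Module.finrank k ψ)) → k) :=
  Matrix.toLinAlgEquiv'.toMonoidHom.comp <| D.tensorInduced <|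
    (LinearMap.toMatrixAlgEquiv (Module.finBasis k ψ)).toMonoidHom.comp ψ.ρ

theorem trace_tensorInducedRep_conj (ψ : FDRep k (MulAut S)) (f : ι → S) :
    LinearMap.trace k _ (D.tensorInducedRep ψ (MulAut.conj f)) =
      ∏ i, ψ.character (MulAut.conj (f i)) :=
  (Matrix.trace_toLin'_eq _).trans <| (D.trace_tensorInduced_conj _ f).trans <|
    Finset.prod_congr rfl fun _ _ => (LinearMap.trace_eq_matrix_trace k _ _).symm

end WreathDecomposition

instance Action.res_preservesMonomorphisms {V : Type*} [Category V] {G H : Type*} [Monoid G]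
    [Monoid H] (f : H →* G) [(Action.forget V G).PreservesMonomorphisms] :
    (Action.res V f).PreservesMonomorphisms where
  preserves g _ := (Action.forget V H).mono_of_mono_map
    (inferInstanceAs (Mono ((Action.forget V G).map g)))

universe u

namespace FDRep

theorem simple_of_simple_comp {k G H V : Type u} [Field k] [Group G] [Group H] [AddCommGroup V]
    [Module k V] [FiniteDimensional k V] (ρ : Representation k G V) (f : H →* G)
    (h : Simple (FDRep.of (ρ.comp f))) : Simple (FDRep.of ρ) :=
  have : Simple ((Action.res _ f).obj (FDRep.of ρ)) := h
  (Action.res _ f).simple_of_simple_obj (FDRep.of ρ)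

theorem simple_of_character_eq_prod {k S ι : Type u} [Field k] [IsAlgClosed k] [CharZero k]
    [Group S] [Fintype S] [Fintype ι] [DecidableEq ι] (χ : FDRep k S) [Simple χ]
    (V : FDRep k (ι → S)) (hV : ∀ f, V.character f = ∏ i, χ.character (f i)) : Simple V := by
  have hχ := (simple_iff_char_is_norm_one χ).mp inferInstance
  rw [simple_iff_char_is_norm_one]
  calc ∑ f : ι → S, V.character f * V.character f⁻¹
      = ∑ f : ι → S, ∏ i, χ.character (f i) * χ.character (f i)⁻¹ := by
        simp only [hV, ← Finset.prod_mul_distrib, Pi.inv_apply]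
    _ = ∏ _ : ι, ∑ s : S, χ.character s * χ.character s⁻¹ :=
        (Fintype.prod_sum fun (_ : ι) (s : S) => χ.character s * χ.character s⁻¹).symm
    _ = Nat.card (ι → S) := by
        rw [hχ, Finset.prod_const, Finset.card_univ, Nat.card_fun, Nat.card_eq_fintype_card (α := ι)]
        push_cast
        rfl

end FDRep

section ConjugationOnNormalSubgroup

variable {G H : Type*} [Group G] [Group H] {N : Subgroup G} [N.Normal]

def MulAut.conjNormalCongr (e : N ≃* H) : G →* MulAut H :=
  (MulAut.congr e).toMonoidHom.comp MulAut.conjNormal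

theorem MulAut.conjNormalCongr_coe (e : N ≃* H) (x : N) :
    MulAut.conjNormalCongr e x = MulAut.conj (e x) := by
  ext t
  simp [MulAut.conjNormalCongr, MulAut.conjNormal_val]

theorem MulAut.conjNormalCongr_comp (e : N ≃* H) :
    (MulAut.conjNormalCongr e).comp (N.subtype.comp e.symm.toMonoidHom) = MulAut.conj := by
  ext f : 1
  simp [MulAut.conjNormalCongr_coe]

theorem MulAut.conjNormal_eq_one_of_mem_centralizer {c : G}
    (hc : c ∈ Subgroup.centralizer (N : Set G)) : (MulAut.conjNormal c : MulAut N) = 1 := by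
  ext x
  simp [MulAut.conjNormal_apply, (Subgroup.mem_centralizer_iff.mp hc x x.2).symm]

theorem MulAut.centralizer_le_ker_conjNormalCongr (e : N ≃* H) :
    Subgroup.centralizer (N : Set G) ≤ (MulAut.conjNormalCongr e).ker := fun c hc => by
  simp [MulAut.conjNormalCongr, MulAut.conjNormal_eq_one_of_mem_centralizer hc]

end ConjugationOnNormalSubgroup

theorem product_character_extends_to_quotient_centralizer_general
    (S : Type) [Group S] [Finite S] [IsSimpleGroup S]
    (hS : ¬ ∀ a b : S, a * b = b * a)
    (G : Type) [Group G] (k : ℕ) (N : Subgroup G)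
    (hN : IsMinimalNormal N) (e : N ≃* (Fin k → S))
    (χ : FDRep ℂ S) (hχ : Simple χ) (hext : ExtendsToAut S χ) :
    (∃ _ : (Subgroup.centralizer (N : Set G)).Normal,
      ∃ W : FDRep ℂ (G ⧸ Subgroup.centralizer (N : Set G)), Simple W ∧
        ∀ x : N, W.character (QuotientGroup.mk (x : G)) = ∏ i, χ.character (e x i)) ∧
      ∃ U : FDRep ℂ G, Simple U ∧ Module.finrank ℂ U = Module.finrank ℂ χ ^ k := by
  have := Fintype.ofFinite S
  have := hN.1
  obtain ⟨ψ, -, hψ⟩ := hext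
  obtain ⟨D⟩ := WreathDecomposition.nonempty (ι := Fin k) hS
  let T := D.tensorInducedRep ψ
  have hT (f : Fin k → S) : LinearMap.trace ℂ _ (T (MulAut.conj f)) = ∏ i, χ.character (f i) := by
    simp only [T, D.trace_tensorInducedRep_conj, hψ]
  let α := MulAut.conjNormalCongr e
  let ᾱ := QuotientGroup.lift _ α (MulAut.centralizer_le_ker_conjNormalCongr e)
  have hU : Simple (FDRep.of (T.comp α)) := by
    refine FDRep.simple_of_simple_comp _ (N.subtype.comp e.symm.toMonoidHom) ?_
    rw [MonoidHom.comp_assoc, MulAut.conjNormalCongr_comp]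
    exact FDRep.simple_of_character_eq_prod χ _ hT
  have hW : Simple (FDRep.of (T.comp ᾱ)) := by
    refine FDRep.simple_of_simple_comp _ (QuotientGroup.mk' _) ?_
    rwa [MonoidHom.comp_assoc, QuotientGroup.lift_comp_mk']
  have hdeg := hψ 1
  rw [map_one, FDRep.char_one, FDRep.char_one, Nat.cast_inj] at hdeg
  refine ⟨⟨inferInstance, FDRep.of (T.comp ᾱ), hW, fun x => ?_⟩, FDRep.of (T.comp α), hU, ?_⟩
  · show LinearMap.trace ℂ _ (T (α x)) = _
    rw [MulAut.conjNormalCongr_coe, hT]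
  · show Module.finrank ℂ ((Fin k → Fin (Module.finrank ℂ ψ)) → ℂ) = _
    rw [Module.finrank_fintype_fun_eq_card, Fintype.card_fun, Fintype.card_fin, Fintype.card_fin,
      hdeg]

/-- If `N ≅ S × ⋯ × S` (`k` copies of a non-abelian finite simple group `S`)
is a minimal normal subgroup of a finite group `G` and `χ ∈ Irr(S)` is extendible to `Aut(S)`,
then the product character `χ × ⋯ × χ` of `N` is extendible to `G/C_G(N)`; in particular `G`
has an irreducible character of degree `χ(1)^k`. -/
theorem product_character_extends_to_quotient_centralizer
    (S : Type) [Group S] [Finite S] [IsSimpleGroup S]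
    (hS : ¬ ∀ a b : S, a * b = b * a)
    (G : Type) [Group G] [Finite G] (k : ℕ) (N : Subgroup G)
    (hN : IsMinimalNormal N) (e : N ≃* (Fin k → S))
    (χ : FDRep ℂ S) (hχ : Simple χ) (hext : ExtendsToAut S χ) :
    (∃ _ : (Subgroup.centralizer (N : Set G)).Normal,
      ∃ W : FDRep ℂ (G ⧸ Subgroup.centralizer (N : Set G)), Simple W ∧
        ∀ x : N, W.character (QuotientGroup.mk (x : G)) = ∏ i, χ.character (e x i)) ∧
      ∃ U : FDRep ℂ G, Simple U ∧ Module.finrank ℂ U = Module.finrank ℂ χ ^ k :=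
  product_character_extends_to_quotient_centralizer_general S hS G k N hN e χ hχ hext
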